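/- Fix p_B ∈ (1/2, 1] and K₀ > 0, and suppose there is D > 0 such that for every n ≥ 1, Bernoulli site percolation with parameter p_B on T^(n) contains a left-right crossing with probability at least 1 − n·exp(−D·n). For each N ≥ 2, let π_N : V_N → [0,1] be site probabilities on the vertex set V_N of T^(N) with associated inhomogeneous site percolation measure μ_{π_N}, and suppose there is a square sub-box Q_N ⊆ V_N, a translate of the box {0,…,ρ(N)−1} × {0,…,ρ(N)−1}, on which π_N ≡ p_B, where ρ(N) ≥ K₀·log N. Then there exist C₁ > 0 and N₀ such that for all N ≥ N₀, the type II error β(N) = μ_{π_N}({ω : T(ω) < K₀·log N}) satisfies β(N) ≤ exp(−C₁·ρ(N)). -/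

import Mathlib

open MeasureTheory

noncomputable def bernoulliBool (p : ℝ) : Measure Bool :=
  (PMF.bernoulli (min (Real.toNNReal p) 1) (min_le_right _ _)).toMeasure

instance (p : ℝ) : IsProbabilityMeasure (bernoulliBool p) :=
  PMF.toMeasure.isProbabilityMeasure _

/-- Inhomogeneous Bernoulli site percolation: the product probability measure on
configurations `ω : V → Bool` under which the coordinates are independent and
`ω s = true` with probability `π s` (when `0 ≤ π s ≤ 1`). -/
noncomputable def sitePerc {V : Type*} [Fintype V] (π : V → ℝ) :
    Measure (V → Bool) :=
  Measure.pi fun s => bernoulliBool (π s)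

/-- The subgraph of occupied sites. -/
def occGraph {V : Type*} (G : SimpleGraph V) (ω : V → Bool) : SimpleGraph V where
  Adj u v := G.Adj u v ∧ ω u = true ∧ ω v = true
  symm := ⟨fun _ _ h => ⟨h.1.symm, h.2.2, h.2.1⟩⟩
  loopless := ⟨fun v h => G.loopless.irrefl v h.1⟩

/-- The occupied cluster of a site `s`: all occupied sites joined to `s` by a
path of occupied sites (empty if `s` is not occupied). -/
def cluster {V : Type*} (G : SimpleGraph V) (ω : V → Bool) (s : V) : Set V :=
  {t | ω s = true ∧ ω t = true ∧ (occGraph G ω).Reachable s t}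

/-- The maximal occupied cluster size `T(ω) = max_s |C(s,ω)|`. -/
noncomputable def maxCluster {V : Type*} [Fintype V] (G : SimpleGraph V) (ω : V → Bool) : ℕ :=
  Finset.univ.sup fun s => (cluster G ω s).ncard

/-- The finite triangular lattice `T^(N)`: vertices are the points of the box
`{0,…,N−1} × {0,…,N−1} ⊆ ℤ × ℤ`, two distinct vertices `s`, `t` being adjacent iff
`t − s ∈ {(1,0),(−1,0),(0,1),(0,−1),(1,1),(−1,−1)}`. -/
def triLattice (N : ℕ) : SimpleGraph (Fin N × Fin N) where
  Adj s t := (((t.1 : ℤ) - (s.1 : ℤ), (t.2 : ℤ) - (s.2 : ℤ)) : ℤ × ℤ) ∈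
    ({(1,0), (-1,0), (0,1), (0,-1), (1,1), (-1,-1)} : Set (ℤ × ℤ))
  symm := by
    constructor
    intro s t h
    simp only [Set.mem_insert_iff, Set.mem_singleton_iff, Prod.mk.injEq] at h ⊢
    omega
  loopless := by
    constructor
    intro s h
    simp only [Set.mem_insert_iff, Set.mem_singleton_iff, Prod.mk.injEq, sub_self] at h
    omega

/-- A left-right crossing of `T^(N)` in a configuration `ω`: a finite sequence of
occupied sites `s₁, …, s_n` such that consecutive sites are adjacent, `s₁` has
first coordinate `0`, and `s_n` has first coordinate `N − 1`. -/
def HasLeftRightCrossing (N : ℕ) (ω : Fin N × Fin N → Bool) : Prop :=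
  ∃ (m : ℕ) (f : Fin (m + 1) → Fin N × Fin N),
    (∀ k, ω (f k) = true) ∧
    (∀ k : Fin m, (triLattice N).Adj (f k.castSucc) (f k.succ)) ∧
    ((f 0).1 : ℕ) = 0 ∧ ((f (Fin.last m)).1 : ℕ) = N - 1

/-!
A left-right crossing of the box `Q_N`, on which `π_N ≡ p_B`, is an occupied path meeting every
column of the box, so its cluster has at least `ρ(N) ≥ K₀ log N` sites. Restricted to `Q_N` the
configuration is Bernoulli(`p_B`) percolation on a copy of `T^(ρ(N))`, hence
`β(N) ≤ 1 - P(crossing of T^(ρ)) ≤ ρ e^{-Dρ} ≤ e^{-Dρ/2}` as soon as `ρ ≥ 8 / D²`, which holds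
for large `N` since `ρ(N) ≥ K₀ log N → ∞`.
-/

section Clusters

variable {V W : Type*}

lemma occGraph_reachable_map {G : SimpleGraph V} {H : SimpleGraph W} (φ : G →g H)
    {ω : W → Bool} {s t : V} (h : (occGraph G (ω ∘ φ)).Reachable s t) :
    (occGraph H ω).Reachable (φ s) (φ t) :=
  h.map (⟨φ, fun hst => ⟨φ.map_adj hst.1, hst.2⟩⟩ : occGraph G (ω ∘ φ) →g occGraph H ω)

lemma maxCluster_comp_le [Fintype V] [Fintype W] {G : SimpleGraph V} {H : SimpleGraph W}
    (φ : G →g H) (hφ : Function.Injective φ) (ω : W → Bool) :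
    maxCluster G (ω ∘ φ) ≤ maxCluster H ω := by
  refine Finset.sup_le fun s _ => ?_
  have hsub : φ '' cluster G (ω ∘ φ) s ⊆ cluster H ω (φ s) := by
    rintro _ ⟨t, ⟨hs, ht, hst⟩, rfl⟩
    exact ⟨hs, ht, occGraph_reachable_map φ hst⟩
  calc (cluster G (ω ∘ φ) s).ncard = (φ '' cluster G (ω ∘ φ) s).ncard :=
        (Set.ncard_image_of_injective _ hφ).symm
    _ ≤ (cluster H ω (φ s)).ncard := Set.ncard_le_ncard hsub (Set.toFinite _)
    _ ≤ maxCluster H ω := Finset.le_sup (f := fun s => (cluster H ω s).ncard) (Finset.mem_univ _)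

lemma mem_cluster_of_path {G : SimpleGraph V} {ω : V → Bool} {m : ℕ} {f : Fin (m + 1) → V}
    (hocc : ∀ k, ω (f k) = true) (hadj : ∀ k : Fin m, G.Adj (f k.castSucc) (f k.succ))
    (k : Fin (m + 1)) : f k ∈ cluster G ω (f 0) := by
  refine ⟨hocc 0, hocc k, ?_⟩
  induction k using Fin.induction with
  | zero => rfl
  | succ k ih => exact ih.trans (SimpleGraph.Adj.reachable ⟨hadj k, hocc _, hocc _⟩)

end Clusters

lemma Fin.exists_eq_of_abs_sub_le_one : ∀ {m : ℕ} (g : Fin (m + 1) → ℤ),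
    (∀ k : Fin m, |g k.succ - g k.castSucc| ≤ 1) →
    ∀ c, g 0 ≤ c → c ≤ g (Fin.last m) → ∃ k, g k = c
  | 0, g, _, c, h0, hlast => ⟨0, le_antisymm h0 hlast⟩
  | m + 1, g, hstep, c, h0, hlast => by
    by_cases hc : c ≤ g (Fin.last m).castSucc
    · obtain ⟨k, hk⟩ := Fin.exists_eq_of_abs_sub_le_one (g ∘ Fin.castSucc)
        (fun k => hstep k.castSucc) c h0 hc
      exact ⟨k.castSucc, hk⟩
    · have := abs_le.1 (hstep (Fin.last m))
      simp only [Fin.succ_last, Nat.succ_eq_add_one] at this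
      exact ⟨Fin.last (m + 1), by omega⟩

lemma le_maxCluster_of_hasLeftRightCrossing {n : ℕ} {ω : Fin n × Fin n → Bool}
    (h : HasLeftRightCrossing n ω) : n ≤ maxCluster (triLattice n) ω := by
  obtain ⟨m, f, hocc, hadj, h0, hlast⟩ := h
  have hcols : ∀ j : Fin n, ∃ k, (f k).1 = j := by
    intro j
    obtain ⟨k, hk⟩ := Fin.exists_eq_of_abs_sub_le_one (fun k => ((f k).1 : ℤ))
      (fun k => by
        have := hadj k
        simp only [triLattice, Set.mem_insert_iff, Set.mem_singleton_iff, Prod.mk.injEq] at this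
        rw [abs_le]; omega)
      j (by simp [h0]) (by simp only [hlast]; omega)
    exact ⟨k, Fin.ext (by exact_mod_cast hk)⟩
  have hsurj : (Set.univ : Set (Fin n)) ⊆ Prod.fst '' cluster (triLattice n) ω (f 0) := by
    intro j _
    obtain ⟨k, hk⟩ := hcols j
    exact ⟨f k, mem_cluster_of_path hocc hadj k, hk⟩
  calc n = (Set.univ : Set (Fin n)).ncard := by simp
    _ ≤ (Prod.fst '' cluster (triLattice n) ω (f 0)).ncard :=
        Set.ncard_le_ncard hsurj (Set.toFinite _)
    _ ≤ (cluster (triLattice n) ω (f 0)).ncard := Set.ncard_image_le (Set.toFinite _)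
    _ ≤ maxCluster (triLattice n) ω :=
        Finset.le_sup (f := fun s => (cluster (triLattice n) ω s).ncard) (Finset.mem_univ _)

def triLatticeShift {r N : ℕ} (a b : ℕ) (ha : a + r ≤ N) (hb : b + r ≤ N) :
    triLattice r ↪g triLattice N where
  toFun s := (⟨a + s.1, by omega⟩, ⟨b + s.2, by omega⟩)
  inj' := by
    intro s t hst
    simp only [Prod.mk.injEq, Fin.mk.injEq, Nat.add_left_cancel_iff] at hst
    exact Prod.ext (Fin.ext hst.1) (Fin.ext hst.2)
  map_rel_iff' {s t} := by
    change ((((a + t.1 : ℕ) : ℤ) - ((a + s.1 : ℕ) : ℤ), ((b + t.2 : ℕ) : ℤ) - ((b + s.2 : ℕ) : ℤ))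
      ∈ _) ↔ _
    push_cast
    ring_nf
    rfl

lemma MeasureTheory.Measure.map_comp_pi {ι κ α : Type*} [Fintype ι] [Fintype κ]
    [MeasurableSpace α] (μ : ι → Measure α) [∀ i, IsProbabilityMeasure (μ i)] {e : κ → ι}
    (he : Function.Injective e) :
    (Measure.pi μ).map (fun ω => ω ∘ e) = Measure.pi fun k => μ (e k) := by
  classical
  refine (Measure.pi_eq fun s hs => ?_).symm
  -- the cylinder over `s` is the box with sides `s` on `range e` and `univ` elsewhere
  set t : ι → Set α := Function.extend e s fun _ => Set.univ
  have ht_range : ∀ k, t (e k) = s k := fun k => he.extend_apply _ _ k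
  have ht_compl : ∀ i, (∀ k, e k ≠ i) → t i = Set.univ := fun i hi =>
    Function.extend_apply' _ _ _ fun ⟨k, hk⟩ => hi k hk
  have hmeas : Measurable fun ω : ι → α => ω ∘ e :=
    measurable_pi_iff.2 fun k => measurable_pi_apply (e k)
  have hpre : (fun ω : ι → α => ω ∘ e) ⁻¹' Set.univ.pi s = Set.univ.pi t := by
    ext ω
    simp only [Set.mem_preimage, Set.mem_univ_pi, Function.comp_apply]
    refine ⟨fun h i => ?_, fun h k => ht_range k ▸ h (e k)⟩
    by_cases hi : ∃ k, e k = i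
    · obtain ⟨k, rfl⟩ := hi
      exact (ht_range k).symm ▸ h k
    · exact (ht_compl i (not_exists.1 hi)).symm ▸ Set.mem_univ _
  have htm : ∀ i, MeasurableSet (t i) := fun i => by
    by_cases hi : ∃ k, e k = i
    · obtain ⟨k, rfl⟩ := hi
      exact (ht_range k).symm ▸ hs k
    · exact (ht_compl i (not_exists.1 hi)).symm ▸ MeasurableSet.univ
  rw [Measure.map_apply hmeas (MeasurableSet.univ_pi hs), hpre, Measure.pi_pi,
    ← Finset.prod_subset (Finset.subset_univ (Finset.univ.image e)) fun i _ hi => by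
      rw [ht_compl i fun k hk => hi (Finset.mem_image.2 ⟨k, Finset.mem_univ k, hk⟩)]
      exact measure_univ,
    Finset.prod_image fun a _ b _ h => he h]
  exact Finset.prod_congr rfl fun k _ => by rw [ht_range]

instance {V : Type*} [Fintype V] (π : V → ℝ) : IsProbabilityMeasure (sitePerc π) := by
  unfold sitePerc
  infer_instance

lemma sitePerc_map_comp {V W : Type*} [Fintype V] [Fintype W] (π : V → ℝ) {e : W → V}
    (he : Function.Injective e) :
    (sitePerc π).map (fun ω => ω ∘ e) = sitePerc (π ∘ e) :=
  Measure.map_comp_pi _ he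

lemma measure_compl_le_ofReal {Ω : Type*} [MeasurableSpace Ω] {μ : Measure Ω}
    [IsProbabilityMeasure μ] {A : Set Ω} (hA : MeasurableSet A) {x : ℝ}
    (h : ENNReal.ofReal (1 - x) ≤ μ A) : μ Aᶜ ≤ ENNReal.ofReal x := by
  rw [prob_compl_eq_one_sub hA, tsub_le_iff_right]
  calc (1 : ENNReal) = ENNReal.ofReal (x + (1 - x)) := by simp
    _ ≤ ENNReal.ofReal x + ENNReal.ofReal (1 - x) := ENNReal.ofReal_add_le
    _ ≤ ENNReal.ofReal x + μ A := by gcongr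

lemma sitePerc_maxCluster_lt_le {N r : ℕ} (e : triLattice r ↪g triLattice N)
    {π : Fin N × Fin N → ℝ} {p : ℝ} (hπ : ∀ s, π (e s) = p) :
    sitePerc π {ω | maxCluster (triLattice N) ω < r} ≤
      sitePerc (fun _ => p) {ω | HasLeftRightCrossing r ω}ᶜ := by
  have hsub : {ω | maxCluster (triLattice N) ω < r} ⊆
      (fun ω => ω ∘ e) ⁻¹' {ω | HasLeftRightCrossing r ω}ᶜ := fun ω hω hcross =>
    -- a crossing of the embedded box gives a cluster with a site in each of its `r` columns
    (le_maxCluster_of_hasLeftRightCrossing hcross |>.trans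
      (maxCluster_comp_le e.toHom e.injective ω)).not_gt hω
  have hπe : π ∘ e = fun _ => p := funext hπ
  have hmeas : Measurable fun ω : Fin N × Fin N → Bool => ω ∘ e :=
    measurable_pi_iff.2 fun k => measurable_pi_apply (e k)
  calc sitePerc π {ω | maxCluster (triLattice N) ω < r}
      ≤ sitePerc π ((fun ω => ω ∘ e) ⁻¹' {ω | HasLeftRightCrossing r ω}ᶜ) := measure_mono hsub
    _ = sitePerc (fun _ => p) {ω | HasLeftRightCrossing r ω}ᶜ := by
      rw [← Measure.map_apply hmeas (Set.toFinite _).measurableSet,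
        sitePerc_map_comp π e.injective, hπe]

lemma mul_exp_neg_le_exp_neg_half {D x : ℝ} (hD : 0 < D) (hx : 8 / D ^ 2 ≤ x) :
    x * Real.exp (-(D * x)) ≤ Real.exp (-(D / 2 * x)) := by
  have hx0 : 0 ≤ x := (by positivity : (0 : ℝ) ≤ 8 / D ^ 2).trans hx
  have hDx : 8 ≤ D ^ 2 * x := by rwa [div_le_iff₀' (by positivity)] at hx
  -- `exp y ≥ y² / 2` with `y = D x / 2`
  have hexp : x ≤ Real.exp (D / 2 * x) := by
    nlinarith [Real.quadratic_le_exp_of_nonneg (by positivity : 0 ≤ D / 2 * x)]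
  calc x * Real.exp (-(D * x)) ≤ Real.exp (D / 2 * x) * Real.exp (-(D * x)) := by gcongr
    _ = Real.exp (-(D / 2 * x)) := by rw [← Real.exp_add]; ring_nf

theorem type_two_error_exponential_rate_general
    (pB : ℝ)
    (K₀ : ℝ) (hK₀ : 0 < K₀)
    (D : ℝ) (hD : 0 < D)
    (hcross : ∀ n : ℕ, 1 ≤ n →
      ENNReal.ofReal (1 - n * Real.exp (-(D * n))) ≤
        sitePerc (fun _ : Fin n × Fin n => pB) {ω | HasLeftRightCrossing n ω})
    (π : (N : ℕ) → Fin N × Fin N → ℝ)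
    (ρ : ℕ → ℕ)
    (hρ : ∀ N : ℕ, 2 ≤ N → K₀ * Real.log N ≤ (ρ N : ℝ))
    (hQ : ∀ N : ℕ, 2 ≤ N → ∃ a b : ℕ, a + ρ N ≤ N ∧ b + ρ N ≤ N ∧
      ∀ s : Fin N × Fin N, a ≤ (s.1 : ℕ) → (s.1 : ℕ) < a + ρ N →
        b ≤ (s.2 : ℕ) → (s.2 : ℕ) < b + ρ N → π N s = pB) :
    ∃ C₁ : ℝ, 0 < C₁ ∧ ∃ N₀ : ℕ, ∀ N : ℕ, N₀ ≤ N →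
      sitePerc (π N)
          {ω | (maxCluster (triLattice N) ω : ℝ) < K₀ * Real.log N} ≤
        ENNReal.ofReal (Real.exp (-(C₁ * ρ N))) := by
  have hlog : Filter.Tendsto (fun N : ℕ => K₀ * Real.log N) Filter.atTop Filter.atTop :=
    (Real.tendsto_log_atTop.comp tendsto_natCast_atTop_atTop).const_mul_atTop hK₀
  obtain ⟨N₀, hN₀⟩ := Filter.eventually_atTop.1 <|
    (Filter.eventually_ge_atTop 2).and (hlog.eventually_ge_atTop (8 / D ^ 2))
  refine ⟨D / 2, by positivity, N₀, fun N hN => ?_⟩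
  obtain ⟨hN2, hlarge⟩ := hN₀ N hN
  obtain ⟨a, b, ha, hb, hπ⟩ := hQ N hN2
  have hρ_large : 8 / D ^ 2 ≤ (ρ N : ℝ) := hlarge.trans (hρ N hN2)
  have hρ_pos : 0 < ρ N := by
    exact_mod_cast (by positivity : (0 : ℝ) < 8 / D ^ 2).trans_le hρ_large
  calc sitePerc (π N) {ω | (maxCluster (triLattice N) ω : ℝ) < K₀ * Real.log N}
      ≤ sitePerc (π N) {ω | maxCluster (triLattice N) ω < ρ N} :=
        measure_mono fun ω hω => Nat.cast_lt.1 <| hω.trans_le (hρ N hN2)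
    _ ≤ sitePerc (fun _ => pB) {ω | HasLeftRightCrossing (ρ N) ω}ᶜ :=
        sitePerc_maxCluster_lt_le (triLatticeShift a b ha hb) fun s =>
          hπ _ (Nat.le_add_right _ _) (Nat.add_lt_add_left s.1.2 a) (Nat.le_add_right _ _)
            (Nat.add_lt_add_left s.2.2 b)
    _ ≤ ENNReal.ofReal (ρ N * Real.exp (-(D * ρ N))) :=
        measure_compl_le_ofReal (Set.toFinite _).measurableSet (hcross _ hρ_pos)
    _ ≤ ENNReal.ofReal (Real.exp (-(D / 2 * ρ N))) :=
        ENNReal.ofReal_le_ofReal (mul_exp_neg_le_exp_neg_half hD hρ_large)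

/-- **Exponential rate for the type II error (Theorem 10 (2)).**
Fix `p_B ∈ (1/2, 1]` and `K₀ > 0`, and suppose there is `D > 0` such that for every
`n ≥ 1`, Bernoulli site percolation with parameter `p_B` on `T^(n)` contains a
left-right crossing with probability at least `1 − n·exp(−D·n)`. For each `N ≥ 2`
let `π_N : V_N → [0,1]` be site probabilities on `T^(N)` and suppose there is a
square sub-box `Q_N ⊆ V_N`, a translate of `{0,…,ρ(N)−1} × {0,…,ρ(N)−1}`, with
`π_N ≡ p_B` on `Q_N`, where `ρ(N) ≥ K₀·log N`. Then there are `C₁ > 0` and `N₀`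
such that for all `N ≥ N₀`, the type II error
`β(N) = μ_{π_N}(T < K₀·log N)` satisfies `β(N) ≤ exp(−C₁·ρ(N))`. -/
theorem type_two_error_exponential_rate
    (pB : ℝ) (hpB : 1/2 < pB) (hpB1 : pB ≤ 1)
    (K₀ : ℝ) (hK₀ : 0 < K₀)
    (D : ℝ) (hD : 0 < D)
    (hcross : ∀ n : ℕ, 1 ≤ n →
      ENNReal.ofReal (1 - n * Real.exp (-(D * n))) ≤
        sitePerc (fun _ : Fin n × Fin n => pB) {ω | HasLeftRightCrossing n ω})
    (π : (N : ℕ) → Fin N × Fin N → ℝ)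
    (hπ0 : ∀ N s, 0 ≤ π N s) (hπ1 : ∀ N s, π N s ≤ 1)
    (ρ : ℕ → ℕ)
    (hρ : ∀ N : ℕ, 2 ≤ N → K₀ * Real.log N ≤ (ρ N : ℝ))
    (hQ : ∀ N : ℕ, 2 ≤ N → ∃ a b : ℕ, a + ρ N ≤ N ∧ b + ρ N ≤ N ∧
      ∀ s : Fin N × Fin N, a ≤ (s.1 : ℕ) → (s.1 : ℕ) < a + ρ N →
        b ≤ (s.2 : ℕ) → (s.2 : ℕ) < b + ρ N → π N s = pB) :
    ∃ C₁ : ℝ, 0 < C₁ ∧ ∃ N₀ : ℕ, ∀ N : ℕ, N₀ ≤ N →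
      sitePerc (π N)
          {ω | (maxCluster (triLattice N) ω : ℝ) < K₀ * Real.log N} ≤
        ENNReal.ofReal (Real.exp (-(C₁ * ρ N))) :=
  type_two_error_exponential_rate_general pB K₀ hK₀ D hD hcross π ρ hρ hQ
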